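/- Let E = [t]_× R where R ∈ SO(3) and t ∈ ℝ³, with [t]_× the 3×3 skew-symmetric matrix of the cross product with t. Then E satisfies det(E) = 0 and E Eᵀ E − (1/2) trace(E Eᵀ) E = 0. -/
import Mathlib


open Matrix

/-- The skew-symmetric cross-product matrix `[t]ₓ` of a vector `t ∈ ℝ³`. -/
def crossMatrix (t : Fin 3 → ℝ) : Matrix (Fin 3) (Fin 3) ℝ :=
  !![0, -t 2, t 1; t 2, 0, -t 0; -t 1, t 0, 0]

theorem essential_matrix_demazure_equations
    (R : Matrix (Fin 3) (Fin 3) ℝ)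
    (hR : R ∈ Matrix.specialOrthogonalGroup (Fin 3) ℝ)
    (t : Fin 3 → ℝ) (E : Matrix (Fin 3) (Fin 3) ℝ)
    (hE : E = crossMatrix t * R) :
    E.det = 0 ∧ E * Eᵀ * E - (1 / 2 * (E * Eᵀ).trace) • E = 0 := by
  obtain ⟨hO, hdet⟩ := Matrix.mem_specialOrthogonalGroup_iff.mp hR
  have hRRt : R * Rᵀ = 1 := by
    have := (Matrix.mem_orthogonalGroup_iff _ _).mp hO
    simpa using this
  set C := crossMatrix t with hC
  have hEEt : E * Eᵀ = C * Cᵀ := by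
    rw [hE, Matrix.transpose_mul]
    calc C * R * (Rᵀ * Cᵀ) = C * (R * Rᵀ) * Cᵀ := by
          simp only [mul_assoc]
    _ = C * Cᵀ := by rw [hRRt, mul_one]
  constructor
  · rw [hE, Matrix.det_mul]
    have : C.det = 0 := by
      simp [hC, crossMatrix, Matrix.det_fin_three]; ring
    rw [this, zero_mul]
  · have key : C * Cᵀ * C - (1 / 2 * (C * Cᵀ).trace) • C = 0 := by
      ext i j
      simp only [hC, crossMatrix, Matrix.sub_apply, Matrix.smul_apply, Matrix.mul_apply,
        Matrix.trace_fin_three, Fin.sum_univ_three, Matrix.transpose_apply, Matrix.zero_apply,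
        smul_eq_mul]
      fin_cases i <;> fin_cases j <;> simp <;> ring
    have h2 : E * Eᵀ * E = (C * Cᵀ * C) * R := by
      rw [hEEt, hE]; simp only [mul_assoc]
    rw [h2, hEEt, hE, ← Matrix.smul_mul, ← Matrix.sub_mul, key, Matrix.zero_mul]
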